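/- Fix integers N, ℓ ≥ 1 and k with ℓ < k ≤ N, and let φ_k : S_{N,k} → S_{N,k−ℓ} be the truncation map sending π to its restriction ⟨π(1),…,π(k−ℓ)⟩. Then for every π ∈ S_{N,k}, the number of distinct images of neighbors of π under φ_k satisfies |{φ_k(σ) : (π,σ) ∈ E(𝒰_{N,ℓ,k})}| ≤ (2ℓ+1)^k. -/

import Mathlib

/-- δ(π,σ) for permutations of `Fin N`. -/
def permDelta {N : ℕ} (π σ : Equiv.Perm (Fin N)) : ℕ :=
  Finset.univ.sup fun i => Nat.dist (π.symm i) (σ.symm i)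

/-- A permutation `π'` of `[N]` extends the `k`-subpermutation `π` if they
agree on the first `k` coordinates. -/
def ExtendsP {N k : ℕ} (π' : Equiv.Perm (Fin N)) (π : Fin k ↪ Fin N) : Prop :=
  ∀ i : Fin k, ∀ h : (i : ℕ) < N, π' ⟨i, h⟩ = π i

/-- δ(π,σ) for `k`-subpermutations: minimum of `permDelta` over extensions. -/
noncomputable def subDelta {N k : ℕ} (π σ : Fin k ↪ Fin N) : ℕ :=
  sInf {d : ℕ | ∃ π' σ' : Equiv.Perm (Fin N),
    ExtendsP π' π ∧ ExtendsP σ' σ ∧ permDelta π' σ' = d}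

lemma permDelta_comm {N : ℕ} (π σ : Equiv.Perm (Fin N)) :
    permDelta π σ = permDelta σ π := by
  simp [permDelta, Nat.dist_comm]

lemma subDelta_comm {N k : ℕ} (π σ : Fin k ↪ Fin N) :
    subDelta π σ = subDelta σ π := by
  unfold subDelta
  congr 1
  ext d
  constructor <;> rintro ⟨a, b, h1, h2, h3⟩ <;>
    exact ⟨b, a, h2, h1, by rw [← h3, permDelta_comm]⟩

/-- The `k`-restricted uncertainty graph `𝒰_{N,ℓ,k}` on vertex set `S_{N,k}`,
the set of `k`-subpermutations of `[N]`.  For `k = N` this is the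
(unrestricted) uncertainty graph `𝒰_{N,ℓ}`. -/
noncomputable def uncGraph (N ℓ k : ℕ) : SimpleGraph (Fin k ↪ Fin N) where
  Adj π σ := (∃ h : 0 < k, π ⟨0, h⟩ ≠ σ ⟨0, h⟩) ∧ subDelta π σ ≤ ℓ
  symm := by
    constructor
    rintro π σ ⟨⟨h, hne⟩, hd⟩
    exact ⟨⟨h, hne.symm⟩, by rwa [subDelta_comm]⟩
  loopless := by constructor; rintro π ⟨⟨h, hne⟩, -⟩; exact hne rfl

lemma exists_extendsP {N k : ℕ} (hkN : k ≤ N) (π : Fin k ↪ Fin N) :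
    ∃ π' : Equiv.Perm (Fin N), ExtendsP π' π := by
  classical
  let f : Fin k ↪ Fin N := Fin.castLEEmb hkN
  let e : {x : Fin N // x ∈ Set.range f} ≃ {x : Fin N // x ∈ Set.range π} :=
    (f.toEquivRange.symm).trans π.toEquivRange
  refine ⟨e.extendSubtype, ?_⟩
  intro i h
  have h1 : (⟨(i : ℕ), h⟩ : Fin N) = f i := rfl
  rw [h1, Equiv.extendSubtype_apply_of_mem e (f i) ⟨i, rfl⟩]
  simp [e, Function.Embedding.toEquivRange_symm_apply_self,
    Function.Embedding.toEquivRange_apply]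

lemma neighbor_values {N ℓ k : ℕ} (hℓk : ℓ < k) (hkN : k ≤ N)
    (π σ : Fin k ↪ Fin N) (h : subDelta π σ ≤ ℓ) (j : Fin (k - ℓ)) :
    ∃ m : ℕ, ∃ hm : m < k, Nat.dist m j ≤ ℓ ∧
      σ (Fin.castLE (Nat.sub_le k ℓ) j) = π ⟨m, hm⟩ := by
  obtain ⟨π₀, hπ₀⟩ := exists_extendsP hkN π
  obtain ⟨σ₀, hσ₀⟩ := exists_extendsP hkN σ
  have hne : {d : ℕ | ∃ π' σ' : Equiv.Perm (Fin N),
      ExtendsP π' π ∧ ExtendsP σ' σ ∧ permDelta π' σ' = d}.Nonempty :=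
    ⟨_, π₀, σ₀, hπ₀, hσ₀, rfl⟩
  have hmem := Nat.sInf_mem hne
  obtain ⟨π', σ', hπ', hσ', hd⟩ := hmem
  have h' : permDelta π' σ' ≤ ℓ := by rw [hd]; exact h
  have hsup : ∀ x : Fin N, Nat.dist (π'.symm x) (σ'.symm x) ≤ ℓ := by
    intro x
    unfold permDelta at h'
    exact Finset.sup_le_iff.mp h' x (Finset.mem_univ x)
  have hjk : (j : ℕ) < k := lt_of_lt_of_le j.isLt (Nat.sub_le k ℓ)
  have hjN : (j : ℕ) < N := lt_of_lt_of_le hjk hkN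
  set j' : Fin k := Fin.castLE (Nat.sub_le k ℓ) j
  set i : Fin N := σ j'
  have hσj : σ' ⟨(j : ℕ), hjN⟩ = i := hσ' j' hjN
  have hsymm : σ'.symm i = ⟨(j : ℕ), hjN⟩ := by rw [← hσj, Equiv.symm_apply_apply]
  have hdist : Nat.dist ((π'.symm i : Fin N) : ℕ) (j : ℕ) ≤ ℓ := by
    have := hsup i
    rwa [hsymm] at this
  set m : ℕ := ((π'.symm i : Fin N) : ℕ)
  have hmk : m < k := by
    have hjkl : (j : ℕ) < k - ℓ := j.isLt
    have : m - (j:ℕ) + ((j:ℕ) - m) ≤ ℓ := hdist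
    omega
  refine ⟨m, hmk, hdist, ?_⟩
  have hmN : m < N := lt_of_lt_of_le hmk hkN
  have := hπ' ⟨m, hmk⟩ hmN
  rw [← this]
  have : (⟨m, hmN⟩ : Fin N) = π'.symm i := rfl
  rw [this, Equiv.apply_symm_apply]


/-- Fix `N, ℓ ≥ 1` and `ℓ < k ≤ N`, and let
`φₖ : S_{N,k} → S_{N,k−ℓ}` be the truncation map. Then for every `π ∈ S_{N,k}`,
the number of distinct images of neighbors of `π` in `𝒰_{N,ℓ,k}` under `φₖ` is
at most `(2ℓ+1)^k`. -/
theorem card_truncated_neighbors_le (N ℓ k : ℕ)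
    (hℓ : 1 ≤ ℓ) (hℓk : ℓ < k) (hkN : k ≤ N) (π : Fin k ↪ Fin N) :
    ((fun σ : Fin k ↪ Fin N =>
        (Fin.castLEEmb (Nat.sub_le k ℓ)).trans σ) ''
      {σ | (uncGraph N ℓ k).Adj π σ}).ncard ≤ (2 * ℓ + 1) ^ k := by
  classical
  have hk : 0 < k := lt_of_le_of_lt (Nat.zero_le ℓ) hℓk
  set F : (Fin (k - ℓ) → Fin (2 * ℓ + 1)) → (Fin (k - ℓ) → Fin N) := fun c j =>
    if h : (c j : ℕ) + (j : ℕ) - ℓ < k then π ⟨(c j : ℕ) + (j : ℕ) - ℓ, h⟩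
    else π ⟨0, hk⟩ with hF
  set T := ((fun σ : Fin k ↪ Fin N =>
        (Fin.castLEEmb (Nat.sub_le k ℓ)).trans σ) ''
      {σ | (uncGraph N ℓ k).Adj π σ}) with hT
  have hsub : (fun τ : Fin (k - ℓ) ↪ Fin N => (τ : Fin (k - ℓ) → Fin N)) '' T
      ⊆ Set.range F := by
    rintro _ ⟨τ, ⟨σ, hσ, rfl⟩, rfl⟩
    choose m hm hdist hval using fun j => neighbor_values hℓk hkN π σ hσ.2 j
    have hub : ∀ j : Fin (k - ℓ), m j + ℓ - (j : ℕ) < 2 * ℓ + 1 := by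
      intro j
      have : m j - (j : ℕ) + ((j : ℕ) - m j) ≤ ℓ := hdist j
      omega
    refine ⟨fun j => ⟨m j + ℓ - (j : ℕ), hub j⟩, ?_⟩
    funext j
    have hrec : m j + ℓ - (j : ℕ) + (j : ℕ) - ℓ = m j := by
      have : m j - (j : ℕ) + ((j : ℕ) - m j) ≤ ℓ := hdist j
      omega
    have hlt : m j + ℓ - (j : ℕ) + (j : ℕ) - ℓ < k := by rw [hrec]; exact hm j
    simp only [hF, hlt, dif_pos]
    have : (⟨m j + ℓ - (j : ℕ) + (j : ℕ) - ℓ, hlt⟩ : Fin k) = ⟨m j, hm j⟩ :=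
      Fin.ext hrec
    rw [this, ← hval j]
    rfl
  calc T.ncard
      = ((fun τ : Fin (k - ℓ) ↪ Fin N => (τ : Fin (k - ℓ) → Fin N)) '' T).ncard :=
        (Set.ncard_image_of_injective _ DFunLike.coe_injective).symm
    _ ≤ (Set.range F).ncard := Set.ncard_le_ncard hsub (Set.toFinite _)
    _ = (F '' Set.univ).ncard := by rw [Set.image_univ]
    _ ≤ (Set.univ : Set (Fin (k - ℓ) → Fin (2 * ℓ + 1))).ncard :=
        Set.ncard_image_le (Set.toFinite _)
    _ = (2 * ℓ + 1) ^ (k - ℓ) := by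
        rw [Set.ncard_univ, Nat.card_eq_fintype_card]
        simp
    _ ≤ (2 * ℓ + 1) ^ k := Nat.pow_le_pow_right (by omega) (Nat.sub_le _ _)
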